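/- arXiv:1409.3905 — 3 statements merged into one kernel-verified Lean document; each statement's English description precedes it below -/
import Mathlib

section
/- Let T = (V,E) be a finite tree with root r. Suppose to each edge e ∈ E corresponds a random variable X_e, and these variables are independent. Suppose to each vertex v ∈ V corresponds an event Ω_v depending only on the variables X_e with v ∈ e, and suppose there are numbers p_v ≤ 1 such that for every v ∈ V and every edge e₀ incident to v, the conditional probability P(Ω_v | {X_e}_{e ≠ e₀}) ≤ p_v almost surely. Then P(⋂_{v ∈ V\{r}} Ω_v) ≤ ∏_{v ∈ V\{r}} p_v. -/
/-!
Induction on the set `S ∌ r` of vertices whose events are intersected. Since `T` is connected and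
`r ∉ S`, some `w ∈ S` has a neighbour `u ∉ S`. No vertex of `S ∖ {w}` lies on the edge `wu`, so
`⋂_{S ∖ {w}} Ω_v` is measurable with respect to the variables `X_e`, `e ≠ wu`; conditioning `Ω_w`
on them gives `P(⋂_S Ω_v) ≤ P(⋂_{S ∖ {w}} Ω_v) · p_w`.
-/

open MeasureTheory ProbabilityTheory

theorem SimpleGraph.Connected.exists_adj_of_mem_of_notMem {V : Type*} {G : SimpleGraph V}
    (hG : G.Connected) {S : Set V} {r w : V} (hr : r ∉ S) (hw : w ∈ S) :
    ∃ a ∈ S, ∃ b ∉ S, G.Adj a b := by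
  obtain ⟨P⟩ := hG.preconnected w r
  obtain ⟨d, -, hd, hd'⟩ := P.exists_boundary_dart S hw hr
  exact ⟨d.fst, hd, d.snd, hd', d.adj⟩

section CondExp

variable {Ω : Type*} {m m0 : MeasurableSpace Ω} {μ : Measure Ω}

theorem nonneg_of_condExp_le [NeZero μ] {g : Ω → ℝ} {c : ℝ} (hg : 0 ≤ᵐ[μ] g)
    (hgc : μ[g | m] ≤ᵐ[μ] fun _ => c) : 0 ≤ c := by
  obtain ⟨ω, h0, hc⟩ := ((condExp_nonneg hg).and hgc).exists
  exact h0.trans hc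

theorem integral_mul_le_of_condExp_le [IsFiniteMeasure μ] (hm : m ≤ m0) {f g : Ω → ℝ} {c : ℝ}
    (hf : StronglyMeasurable[m] f) (hf0 : 0 ≤ᵐ[μ] f) (hfi : Integrable f μ)
    (hfg : Integrable (f * g) μ) (hg : Integrable g μ) (hgc : μ[g | m] ≤ᵐ[μ] fun _ => c) :
    ∫ ω, f ω * g ω ∂μ ≤ (∫ ω, f ω ∂μ) * c :=
  calc ∫ ω, f ω * g ω ∂μ
      = ∫ ω, μ[f * g | m] ω ∂μ := (integral_condExp hm).symm
    _ ≤ ∫ ω, f ω * c ∂μ := by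
        refine integral_mono_ae integrable_condExp (hfi.mul_const c) ?_
        filter_upwards [condExp_mul_of_stronglyMeasurable_left hf hfg hg, hf0, hgc]
          with ω hfgω hfω hgω
        rw [hfgω]
        exact mul_le_mul_of_nonneg_left hgω hfω
    _ = (∫ ω, f ω ∂μ) * c := integral_mul_const c f

theorem measureReal_inter_le_of_condExp_indicator_le [IsFiniteMeasure μ] (hm : m ≤ m0)
    {s t : Set Ω} {c : ℝ} (hs : MeasurableSet[m] s) (ht : MeasurableSet t)
    (htc : μ[t.indicator (fun _ => (1 : ℝ)) | m] ≤ᵐ[μ] fun _ => c) :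
    μ.real (s ∩ t) ≤ μ.real s * c := by
  have hs' : MeasurableSet s := hm s hs
  have hst : Integrable (s.indicator 1 * t.indicator 1 : Ω → ℝ) μ := by
    rw [← Set.inter_indicator_one]
    exact (integrable_const 1).indicator (hs'.inter ht)
  rw [← integral_indicator_one (hs'.inter ht), ← integral_indicator_one hs',
    Set.inter_indicator_one]
  exact integral_mul_le_of_condExp_le hm (stronglyMeasurable_one.indicator hs)
    (.of_forall (Set.indicator_nonneg fun _ _ => zero_le_one)) ((integrable_const 1).indicator hs')
    hst ((integrable_const 1).indicator ht) htc

end CondExp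

section EdgeVariables

variable {V : Type*} {G : SimpleGraph V} {Ω : Type*} {β : Type*}
  [mβ : MeasurableSpace β] (X : G.edgeSet → Ω → β)

theorem iSup_comap_incident_le_iSup_comap_ne {v : V} {e₀ : G.edgeSet}
    (hv : v ∉ (e₀ : Sym2 V)) :
    ⨆ (e : G.edgeSet) (_ : v ∈ (e : Sym2 V)), MeasurableSpace.comap (X e) mβ ≤
      ⨆ (e : G.edgeSet) (_ : e ≠ e₀), MeasurableSpace.comap (X e) mβ :=
  iSup₂_le fun e he => le_iSup₂_of_le (f := fun e (_ : e ≠ e₀) => _) e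
    (by rintro rfl; exact hv he) le_rfl

variable [DecidableEq V] [MeasurableSpace Ω] {μ : Measure Ω} [IsProbabilityMeasure μ]

theorem measureReal_biInter_le_prod (hG : G.Connected) (hX : ∀ e, Measurable (X e))
    (A : V → Set Ω) (hA : ∀ v, MeasurableSet (A v))
    (hdep : ∀ v, MeasurableSet[⨆ (e : G.edgeSet) (_ : v ∈ (e : Sym2 V)),
      MeasurableSpace.comap (X e) mβ] (A v))
    (p : V → ℝ)
    (hcond : ∀ (v : V) (e₀ : G.edgeSet), v ∈ (e₀ : Sym2 V) →
      μ[(A v).indicator (fun _ => (1 : ℝ)) |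
          ⨆ (e : G.edgeSet) (_ : e ≠ e₀), MeasurableSpace.comap (X e) mβ]
        ≤ᵐ[μ] fun _ => p v)
    {r : V} (S : Finset V) (hrS : r ∉ S) :
    μ.real (⋂ v ∈ S, A v) ≤ ∏ v ∈ S, p v := by
  induction S using Finset.strongInduction with
  | H S ih =>
    rcases S.eq_empty_or_nonempty with rfl | ⟨w₀, hw₀⟩
    · simp
    obtain ⟨w, hwS, u, huS, hwu⟩ := hG.exists_adj_of_mem_of_notMem (S := (S : Set V)) hrS hw₀
    set e₀ : G.edgeSet := ⟨s(w, u), hwu⟩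
    have hm : ⨆ (e : G.edgeSet) (_ : e ≠ e₀), MeasurableSpace.comap (X e) mβ ≤ ‹_› :=
      iSup₂_le fun e _ => (hX e).comap_le
    have hrest : MeasurableSet[⨆ (e : G.edgeSet) (_ : e ≠ e₀), MeasurableSpace.comap (X e) mβ]
        (⋂ v ∈ S.erase w, A v) := by
      refine Finset.measurableSet_biInter _ fun v hv => ?_
      obtain ⟨hvw, hvS⟩ := Finset.mem_erase.mp hv
      refine iSup_comap_incident_le_iSup_comap_ne X ?_ _ (hdep v)
      rw [Sym2.mem_iff]
      rintro (rfl | rfl)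
      exacts [hvw rfl, huS hvS]
    have hpw : 0 ≤ p w := nonneg_of_condExp_le
      (.of_forall (Set.indicator_nonneg fun _ _ => zero_le_one))
      (hcond w e₀ (Sym2.mem_mk_left w u))
    calc μ.real (⋂ v ∈ S, A v)
        = μ.real ((⋂ v ∈ S.erase w, A v) ∩ A w) := by
          rw [← Finset.insert_erase hwS, Finset.set_biInter_insert, Set.inter_comm,
            Finset.erase_insert (Finset.notMem_erase w S)]
      _ ≤ μ.real (⋂ v ∈ S.erase w, A v) * p w :=
          measureReal_inter_le_of_condExp_indicator_le hm hrest (hA w)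
            (hcond w e₀ (Sym2.mem_mk_left w u))
      _ ≤ (∏ v ∈ S.erase w, p v) * p w :=
          mul_le_mul_of_nonneg_right (ih _ (Finset.erase_ssubset hwS)
            fun h => hrS (Finset.mem_of_mem_erase h)) hpw
      _ = ∏ v ∈ S, p v := Finset.prod_erase_mul S p hwS

end EdgeVariables

theorem stmt2_general {V : Type*} [Fintype V] [DecidableEq V]
    (T : SimpleGraph V) (hT : T.IsTree) (r : V)
    {Ω : Type*} [MeasureSpace Ω] [IsProbabilityMeasure (volume : Measure Ω)]
    {β : Type*} [mβ : MeasurableSpace β]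
    (X : T.edgeSet → Ω → β) (hXmeas : ∀ e, Measurable (X e))
    (Ωv : V → Set Ω) (hΩmeas : ∀ v, MeasurableSet (Ωv v))
    (hdep : ∀ v : V, MeasurableSet[⨆ (e : T.edgeSet) (_ : v ∈ (e : Sym2 V)),
      MeasurableSpace.comap (X e) mβ] (Ωv v))
    (p : V → ℝ)
    (hcond : ∀ (v : V) (e₀ : T.edgeSet), v ∈ (e₀ : Sym2 V) →
      (volume[(Ωv v).indicator (fun _ => (1 : ℝ)) |
          ⨆ (e : T.edgeSet) (_ : e ≠ e₀), MeasurableSpace.comap (X e) mβ])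
        ≤ᵐ[volume] fun _ => p v) :
    volume (⋂ v ∈ ({r}ᶜ : Set V), Ωv v) ≤
      ENNReal.ofReal (∏ v ∈ Finset.univ.erase r, p v) := by
  have hbound := measureReal_biInter_le_prod X hT.connected hXmeas Ωv hΩmeas hdep p hcond
    (Finset.univ.erase r) (Finset.notMem_erase r _)
  have hsets : ⋂ v ∈ ({r}ᶜ : Set V), Ωv v = ⋂ v ∈ Finset.univ.erase r, Ωv v := by
    simp
  rw [hsets, ← ENNReal.ofReal_toReal (measure_ne_top volume _)]
  exact ENNReal.ofReal_le_ofReal hbound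

/-- Lemma 2.4: let T be a finite tree with root r, with independent random
variables X_e attached to the edges, and events Ω_v attached to the vertices, Ω_v
depending only on the variables X_e with v ∈ e. If for every vertex v and every
edge e₀ incident to v the conditional probability of Ω_v given all the variables
{X_e}_{e ≠ e₀} is a.s. at most p_v, then
P(⋂_{v ≠ r} Ω_v) ≤ ∏_{v ≠ r} p_v. -/
theorem stmt2 {V : Type*} [Fintype V] [DecidableEq V]
    (T : SimpleGraph V) (hT : T.IsTree) (r : V)
    {Ω : Type*} [MeasureSpace Ω] [IsProbabilityMeasure (volume : Measure Ω)]
    {β : Type*} [mβ : MeasurableSpace β]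
    (X : T.edgeSet → Ω → β) (hXmeas : ∀ e, Measurable (X e))
    (hindep : iIndepFun X volume)
    (Ωv : V → Set Ω) (hΩmeas : ∀ v, MeasurableSet (Ωv v))
    (hdep : ∀ v : V, MeasurableSet[⨆ (e : T.edgeSet) (_ : v ∈ (e : Sym2 V)),
      MeasurableSpace.comap (X e) mβ] (Ωv v))
    (p : V → ℝ) (hp : ∀ v, p v ≤ 1)
    (hcond : ∀ (v : V) (e₀ : T.edgeSet), v ∈ (e₀ : Sym2 V) →
      (volume[(Ωv v).indicator (fun _ => (1 : ℝ)) |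
          ⨆ (e : T.edgeSet) (_ : e ≠ e₀), MeasurableSpace.comap (X e) mβ])
        ≤ᵐ[volume] fun _ => p v) :
    volume (⋂ v ∈ ({r}ᶜ : Set V), Ωv v) ≤
      ENNReal.ofReal (∏ v ∈ Finset.univ.erase r, p v) :=
  stmt2_general T hT r (mβ := mβ) X hXmeas Ωv hΩmeas hdep p hcond
end

section
/- Let W be an n×n real skew-symmetric random matrix with independent (up to skew-symmetry) centered Gaussian entries, and let c > 0. Assume that for every column index j ∈ [n] there are at least d indices i with Var(w_{ij}) ≥ n^{-c}. Then there exist constants C, c' depending only on c such that for every unit vector x ∈ S^{n-1} and every t > 0, P(‖Wx‖₂ ≤ t·n^{-c'}) ≤ (C t)^d. -/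
/-!
Choose a coordinate `k` with `n x_k² ≥ 1` and `d` rows `i ≠ k` with `Var w_{ik} ≥ n^{-c}`. For each
such row, `(Wx)_i = w_{ik} x_k + ρ_i`, where `ρ_i` only involves entries off row and column `k`;
so `ρ` is independent of the column entries `w_{ik}`, which are independent of each other.
Conditionally on `ρ`, the events `|(Wx)_i| ≤ s` are independent, and each asks a Gaussian of
variance `v` to hit an interval of length `2s/|x_k|`, which has probability at most
`2s / (|x_k| √(2πv)) ≤ t` for `s = t n^{-(c+1)/2}`. Hence one may take `C = 1`, `c' = (c+1)/2`.
-/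

open MeasureTheory ProbabilityTheory Matrix Real

open scoped ENNReal

lemma gaussianPDFReal_le_inv_sqrt (m : ℝ) (v : NNReal) (x : ℝ) :
    gaussianPDFReal m v x ≤ (√(2 * π * v))⁻¹ := by
  rw [gaussianPDFReal_def]
  refine mul_le_of_le_one_right (by positivity) (exp_le_one_iff.2 ?_)
  exact div_nonpos_of_nonpos_of_nonneg (neg_nonpos.2 (sq_nonneg _)) (by positivity)

lemma gaussianReal_le_mul_volume (m : ℝ) {v : NNReal} (hv : v ≠ 0) (s : Set ℝ) :
    gaussianReal m v s ≤ ENNReal.ofReal (√(2 * π * v))⁻¹ * volume s := by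
  rw [gaussianReal_apply m hv, ← setLIntegral_const]
  exact lintegral_mono fun x => ENNReal.ofReal_le_ofReal (gaussianPDFReal_le_inv_sqrt m v x)

lemma gaussianReal_abs_mul_add_le (m : ℝ) {v : NNReal} (hv : v ≠ 0) {a : ℝ} (ha : a ≠ 0)
    (r s : ℝ) :
    gaussianReal m v {u | |u * a + r| ≤ s} ≤ ENNReal.ofReal (2 * s / (|a| * √(2 * π * v))) := by
  have hball : {u : ℝ | |u * a + r| ≤ s} = Metric.closedBall (-r / a) (s / |a|) := by
    ext u
    have : (u - -r / a) * a = u * a + r := by field_simp; ring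
    rw [Set.mem_ofPred_eq, Metric.mem_closedBall, Real.dist_eq, le_div_iff₀ (abs_pos.2 ha),
      ← abs_mul, this]
  calc gaussianReal m v {u | |u * a + r| ≤ s}
      ≤ ENNReal.ofReal (√(2 * π * v))⁻¹ * volume (Metric.closedBall (-r / a) (s / |a|)) :=
        hball ▸ gaussianReal_le_mul_volume m hv _
    _ = ENNReal.ofReal (2 * s / (|a| * √(2 * π * v))) := by
        rw [Real.volume_closedBall, ← ENNReal.ofReal_mul (by positivity)]
        congr 1
        field_simp

lemma gaussianReal_abs_mul_add_le_of_le {N c t : ℝ} (hN : 0 < N) (ht : 0 ≤ t) {v : NNReal}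
    (hv : N ^ (-c) ≤ v) {a : ℝ} (ha : 1 ≤ N * a ^ 2) (r : ℝ) :
    gaussianReal 0 v {u | |u * a + r| ≤ t * N ^ (-((c + 1) / 2))} ≤ ENNReal.ofReal t := by
  have hv0 : (0 : ℝ) < v := (rpow_pos_of_pos hN _).trans_le hv
  have ha0 : a ≠ 0 := by rintro rfl; norm_num at ha
  have hsq : (N ^ (-((c + 1) / 2))) ^ 2 = N ^ (-c) / N := by
    rw [← rpow_natCast, ← rpow_mul hN.le, ← rpow_sub_one hN.ne']
    norm_num; ring_nf
  have key : 2 * N ^ (-((c + 1) / 2)) ≤ |a| * √(2 * π * v) := by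
    refine le_of_pow_le_pow_left₀ two_ne_zero (by positivity) ?_
    rw [mul_pow, mul_pow, sq_abs, sq_sqrt (by positivity), hsq]
    have hNa : 1 / N ≤ a ^ 2 := by rw [div_le_iff₀ hN]; linarith
    calc 2 ^ 2 * (N ^ (-c) / N) = 4 * (1 / N) * N ^ (-c) := by ring
      _ ≤ (2 * π) * a ^ 2 * v := by
        gcongr
        linarith [pi_gt_three]
      _ = _ := by ring
  refine (gaussianReal_abs_mul_add_le 0 (by exact_mod_cast hv0.ne') ha0 r _).trans
    (ENNReal.ofReal_le_ofReal ?_)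
  rw [div_le_iff₀ (by positivity)]
  linarith [mul_le_mul_of_nonneg_left key ht]

namespace ProbabilityTheory

variable {Ω β γ : Type*} [MeasurableSpace Ω] [MeasurableSpace β] [MeasurableSpace γ]
  {μ : Measure Ω}

lemma IndepFun.measure_prodMk_mem_le [IsProbabilityMeasure μ] {Z : Ω → β} {Y : Ω → γ}
    (hZ : Measurable Z) (hY : Measurable Y) (hZY : IndepFun Z Y μ) {B : Set (β × γ)}
    (hB : MeasurableSet B) {ε : ℝ≥0∞} (hε : ∀ z, μ {ω | (z, Y ω) ∈ B} ≤ ε) :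
    μ {ω | (Z ω, Y ω) ∈ B} ≤ ε := by
  have hmap := (indepFun_iff_map_prod_eq_prod_map_map hZ.aemeasurable hY.aemeasurable).1 hZY
  have := Measure.isProbabilityMeasure_map (μ := μ) hZ.aemeasurable
  calc μ {ω | (Z ω, Y ω) ∈ B} = ((μ.map Z).prod (μ.map Y)) B := by
        rw [← hmap, Measure.map_apply (hZ.prodMk hY) hB]; rfl
    _ = ∫⁻ z, μ.map Y (Prod.mk z ⁻¹' B) ∂μ.map Z := Measure.prod_apply hB
    _ ≤ ∫⁻ _, ε ∂μ.map Z := lintegral_mono fun z => by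
        rw [Measure.map_apply hY (measurable_prodMk_left hB)]; exact hε z
    _ = ε := by simp

lemma iIndepFun.indepFun_of_measurable_iSup {ι : Type*} {κ : ι → Type*}
    [m : ∀ i, MeasurableSpace (κ i)] {g : ∀ i, Ω → κ i} (hg : iIndepFun g μ)
    (hmeas : ∀ i, Measurable (g i)) {S T : Set ι} (hST : Disjoint S T) {X : Ω → β} {Y : Ω → γ}
    (hX : Measurable[⨆ i ∈ S, (m i).comap (g i)] X)
    (hY : Measurable[⨆ i ∈ T, (m i).comap (g i)] Y) :
    IndepFun X Y μ := by
  rw [IndepFun_iff_Indep]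
  exact indep_of_indep_of_le (indep_iSup_of_disjoint (fun i => (hmeas i).comap_le) hg.iIndep hST)
    hX.comap_le hY.comap_le

end ProbabilityTheory

section SkewEntries

lemma entry_swap_of_transpose_eq_neg {ι : Type*} {A : Matrix ι ι ℝ} (hA : Aᵀ = -A) (i j : ι) :
    A j i = -A i j := by
  simpa using congrFun (congrFun hA i) j

lemma diag_eq_zero_of_transpose_eq_neg {ι : Type*} {A : Matrix ι ι ℝ} (hA : Aᵀ = -A) (i : ι) :
    A i i = 0 := by
  linarith [entry_swap_of_transpose_eq_neg hA i i]

variable {ι : Type*} [LinearOrder ι]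

def upperPair (i j : ι) (h : i ≠ j) : {p : ι × ι // p.1 < p.2} :=
  ⟨(min i j, max i j), min_lt_max.2 h⟩

lemma upperPair_left_injective {i i' k : ι} (hi : i ≠ k) (hi' : i' ≠ k)
    (h : upperPair i k hi = upperPair i' k hi') : i = i' := by
  simp only [upperPair, Subtype.mk.injEq, Prod.mk.injEq] at h
  rcases lt_or_gt_of_ne hi with h1 | h1 <;> rcases lt_or_gt_of_ne hi' with h2 | h2 <;>
    simp_all [h1.le, h2.le]

def pairsContaining (k : ι) : Set {p : ι × ι // p.1 < p.2} :=
  {q | q.1.1 = k ∨ q.1.2 = k}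

lemma upperPair_mem_pairsContaining (i k : ι) (h : i ≠ k) :
    upperPair i k h ∈ pairsContaining k := by
  rcases le_total i k with hik | hik <;> simp [pairsContaining, upperPair, hik]

lemma upperPair_notMem_pairsContaining {i j k : ι} (h : i ≠ j) (hi : i ≠ k) (hj : j ≠ k) :
    upperPair i j h ∉ pairsContaining k := by
  rcases le_total i j with hij | hij <;> simp [pairsContaining, upperPair, hij, hi, hj]

def upperEntries {Ω : Type*} (W : Ω → Matrix ι ι ℝ) (q : {p : ι × ι // p.1 < p.2}) : Ω → ℝ :=
  fun ω => W ω q.1.1 q.1.2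

variable {Ω : Type*} {W : Ω → Matrix ι ι ℝ}

lemma measurable_entry_comap_upperPair (hW : ∀ ω, (W ω)ᵀ = -W ω) {i j : ι} (h : i ≠ j) :
    Measurable[(inferInstance : MeasurableSpace ℝ).comap (upperEntries W (upperPair i j h))]
      fun ω => W ω i j := by
  rcases lt_or_gt_of_ne h with hij | hij
  · have : (fun ω => W ω i j) = upperEntries W (upperPair i j h) := by
      funext ω
      simp [upperEntries, upperPair, hij.le]
    rw [this]
    exact comap_measurable _
  · have : (fun ω => W ω i j) = fun ω => -upperEntries W (upperPair i j h) ω := by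
      funext ω
      simp [upperEntries, upperPair, hij.le, entry_swap_of_transpose_eq_neg (hW ω) i j]
    rw [this]
    exact (comap_measurable _).neg

lemma measurable_entry_iSup (hW : ∀ ω, (W ω)ᵀ = -W ω) {i j : ι}
    {S : Set {p : ι × ι // p.1 < p.2}} (hS : ∀ h : i ≠ j, upperPair i j h ∈ S) :
    Measurable[⨆ q ∈ S, (inferInstance : MeasurableSpace ℝ).comap (upperEntries W q)]
      fun ω => W ω i j := by
  by_cases h : i = j
  · subst h
    simp only [diag_eq_zero_of_transpose_eq_neg (hW _)]
    exact measurable_const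
  · exact (measurable_entry_comap_upperPair hW h).mono
      (le_iSup₂ (f := fun q _ => (inferInstance : MeasurableSpace ℝ).comap (upperEntries W q))
        _ (hS h)) le_rfl

end SkewEntries

section RandomSkewMatrix

variable {ι : Type*} {Ω : Type*} [MeasurableSpace Ω] {μ : Measure Ω} {W : Ω → Matrix ι ι ℝ}

lemma variance_diag_eq_zero (hW : ∀ ω, (W ω)ᵀ = -W ω) (k : ι) :
    variance (fun ω => W ω k k) μ = 0 := by
  simp only [diag_eq_zero_of_transpose_eq_neg (hW _)]
  exact variance_zero μ

variable [LinearOrder ι]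

lemma map_entry_eq_gaussianReal (hW : ∀ ω, (W ω)ᵀ = -W ω)
    (hmeas : ∀ i j, Measurable fun ω => W ω i j)
    (hgauss : ∀ i j, i < j → ∃ v : NNReal, μ.map (fun ω => W ω i j) = gaussianReal 0 v)
    {i j : ι} (h : i ≠ j) : ∃ v : NNReal, μ.map (fun ω => W ω i j) = gaussianReal 0 v := by
  rcases lt_or_gt_of_ne h with hij | hij
  · exact hgauss i j hij
  · obtain ⟨v, hv⟩ := hgauss j i hij
    have : (fun ω => W ω i j) = (fun u => -u) ∘ fun ω => W ω j i := by
      funext ω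
      simp [entry_swap_of_transpose_eq_neg (hW ω) j i]
    exact ⟨v, by rw [this, ← Measure.map_map measurable_neg (hmeas j i), hv, gaussianReal_map_neg,
      neg_zero]⟩

lemma measure_abs_entry_mul_add_le (hW : ∀ ω, (W ω)ᵀ = -W ω)
    (hmeas : ∀ i j, Measurable fun ω => W ω i j)
    (hgauss : ∀ i j, i < j → ∃ v : NNReal, μ.map (fun ω => W ω i j) = gaussianReal 0 v)
    {i k : ι} (hik : i ≠ k) {N c t : ℝ} (hN : 0 < N) (ht : 0 ≤ t)
    (hvar : N ^ (-c) ≤ variance (fun ω => W ω i k) μ) {a : ℝ} (ha : 1 ≤ N * a ^ 2) (r : ℝ) :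
    μ {ω | |W ω i k * a + r| ≤ t * N ^ (-((c + 1) / 2))} ≤ ENNReal.ofReal t := by
  obtain ⟨v, hv⟩ := map_entry_eq_gaussianReal hW hmeas hgauss hik
  rw [HasLaw.variance_eq ⟨(hmeas i k).aemeasurable, hv⟩, variance_id_gaussianReal] at hvar
  change μ ((fun ω => W ω i k) ⁻¹' {u | |u * a + r| ≤ t * N ^ (-((c + 1) / 2))}) ≤ _
  rw [← Measure.map_apply (hmeas i k) (measurableSet_le (by fun_prop) measurable_const), hv]
  exact gaussianReal_abs_mul_add_le_of_le hN ht hvar ha r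

lemma measure_forall_column_mem (hW : ∀ ω, (W ω)ᵀ = -W ω) (hind : iIndepFun (upperEntries W) μ)
    {k : ι} {S : Finset ι} (hkS : k ∉ S) {A : S → Set ℝ} (hA : ∀ i, MeasurableSet (A i)) :
    μ {ω | ∀ i : S, W ω i k ∈ A i} = ∏ i : S, μ {ω | W ω i k ∈ A i} := by
  have hne : ∀ i : S, (i : ι) ≠ k := fun i h => hkS (h ▸ i.2)
  have hinj : Function.Injective fun i : S => upperPair (i : ι) k (hne i) :=
    fun i i' h => Subtype.ext (upperPair_left_injective _ _ h)
  rw [Set.ofPred_forall]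
  exact (hind.precomp hinj).meas_iInter fun i => measurable_entry_comap_upperPair hW (hne i) (hA i)

lemma measure_forall_abs_mulVec_le [Fintype ι] [IsProbabilityMeasure μ]
    (hW : ∀ ω, (W ω)ᵀ = -W ω) (hmeas : ∀ i j, Measurable fun ω => W ω i j)
    (hind : iIndepFun (upperEntries W) μ) (x : ι → ℝ) {k : ι} {S : Finset ι} (hkS : k ∉ S)
    {s : ℝ} {ε : ℝ≥0∞} (hε : ∀ i ∈ S, ∀ r : ℝ, μ {ω | |W ω i k * x k + r| ≤ s} ≤ ε) :
    μ {ω | ∀ i ∈ S, |(W ω *ᵥ x) i| ≤ s} ≤ ε ^ S.card := by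
  have hne : ∀ i : S, (i : ι) ≠ k := fun i h => hkS (h ▸ i.2)
  let Z : Ω → S → ℝ := fun ω i => ∑ j ∈ Finset.univ.erase k, W ω i j * x j
  let Y : Ω → S → ℝ := fun ω i => W ω i k
  have hZY : IndepFun Z Y μ := by
    -- `Ω` carries sub-σ-algebras of the entries here, so `measurable_pi_lambda` gets them by `@`
    refine hind.indepFun_of_measurable_iSup (fun q => hmeas _ _)
      (disjoint_compl_left (a := pairsContaining k))
      (@measurable_pi_lambda Ω S (fun _ => ℝ) (⨆ q ∈ (pairsContaining k)ᶜ, _) _ Z fun i =>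
        Finset.measurable_sum _ fun j hj => ?_)
      (@measurable_pi_lambda Ω S (fun _ => ℝ) (⨆ q ∈ pairsContaining k, _) _ Y fun i =>
        measurable_entry_iSup hW fun h => upperPair_mem_pairsContaining _ _ h)
    exact (measurable_entry_iSup hW fun h =>
      upperPair_notMem_pairsContaining h (hne i) (Finset.ne_of_mem_erase hj)).mul_const _
  have hevent : {ω | ∀ i ∈ S, |(W ω *ᵥ x) i| ≤ s}
      = {ω | (Z ω, Y ω) ∈ {p : (S → ℝ) × (S → ℝ) | ∀ i, |p.2 i * x k + p.1 i| ≤ s}} := by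
    ext ω
    simp only [Set.mem_ofPred_eq, Subtype.forall, Z, Y, mulVec, dotProduct,
      ← Finset.add_sum_erase _ _ (Finset.mem_univ k)]
  rw [hevent]
  refine hZY.measure_prodMk_mem_le (by fun_prop) (by fun_prop) ?_ fun r => ?_
  · rw [Set.ofPred_forall]
    exact MeasurableSet.iInter fun i => measurableSet_le (by fun_prop) measurable_const
  calc μ {ω | ∀ i : S, W ω i k ∈ {u | |u * x k + r i| ≤ s}}
      = ∏ i : S, μ {ω | W ω i k ∈ {u | |u * x k + r i| ≤ s}} :=
        measure_forall_column_mem hW hind hkS fun i =>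
          measurableSet_le (by fun_prop) measurable_const
    _ ≤ ∏ _i : S, ε := Finset.prod_le_prod' fun i _ => hε i i.2 (r i)
    _ = ε ^ S.card := by simp

end RandomSkewMatrix

lemma exists_norm_sq_le_card_mul_sq {ι : Type*} [Fintype ι] [Nonempty ι]
    (x : EuclideanSpace ℝ ι) : ∃ k, ‖x‖ ^ 2 ≤ Fintype.card ι * x k ^ 2 := by
  obtain ⟨k, -, hk⟩ := Finset.exists_max_image Finset.univ (fun i => x i ^ 2) Finset.univ_nonempty
  refine ⟨k, ?_⟩
  rw [EuclideanSpace.real_norm_sq_eq]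
  simpa using Finset.sum_le_card_nsmul Finset.univ _ _ fun i _ => hk i (Finset.mem_univ i)

/-- Lemma 2.1: let W be an n × n random skew-symmetric matrix with independent (up
to skew-symmetry) centered Gaussian entries, and c > 0. If every column j has at
least d entries with variance ≥ n^{-c}, then there are constants C, c' > 0
depending only on c such that for every unit vector x and every t > 0,
P(‖Wx‖₂ ≤ t·n^{-c'}) ≤ (Ct)^d. -/
theorem stmt4 (c : ℝ) (hc : 0 < c) :
    ∃ C c' : ℝ, 0 < C ∧ 0 < c' ∧
      ∀ (n d : ℕ) {Ω : Type} [MeasureSpace Ω]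
        [IsProbabilityMeasure (volume : Measure Ω)]
        (W : Ω → Matrix (Fin n) (Fin n) ℝ),
        (∀ i j, Measurable fun ω => W ω i j) →
        (∀ ω, (W ω)ᵀ = -(W ω)) →
        iIndepFun
          (fun (p : {p : Fin n × Fin n // p.1 < p.2}) (ω : Ω) =>
            W ω p.1.1 p.1.2) volume →
        (∀ i j : Fin n, i < j → ∃ v : NNReal,
          Measure.map (fun ω => W ω i j) volume = gaussianReal 0 v) →
        (∀ j : Fin n, d ≤ (Finset.univ.filter (fun i : Fin n =>
          (n : ℝ) ^ (-c) ≤ variance (fun ω => W ω i j) volume)).card) →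
        ∀ x : EuclideanSpace ℝ (Fin n), ‖x‖ = 1 → ∀ t : ℝ, 0 < t →
          volume {ω | ‖Matrix.toEuclideanCLM (𝕜 := ℝ) (W ω) x‖ ≤ t * (n : ℝ) ^ (-c')} ≤
            ENNReal.ofReal ((C * t) ^ d) := by
  refine ⟨1, (c + 1) / 2, one_pos, by positivity, ?_⟩
  intro n d Ω _ _ W hmeas hskew hindep hgauss hvar x hx t ht
  have hn : 0 < n := Nat.pos_of_ne_zero fun h => by
    subst h
    simp [Subsingleton.elim x 0] at hx
  have : Nonempty (Fin n) := ⟨⟨0, hn⟩⟩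
  obtain ⟨k, hk⟩ := exists_norm_sq_le_card_mul_sq x
  rw [hx, one_pow, Fintype.card_fin] at hk
  obtain ⟨S, hSk, hScard⟩ := Finset.exists_subset_card_eq (hvar k)
  have hkS : k ∉ S := fun hkS => by
    have := (Finset.mem_filter.1 (hSk hkS)).2
    rw [variance_diag_eq_zero hskew] at this
    exact (rpow_pos_of_pos (by positivity) _).not_ge this
  have hentry : ∀ i ∈ S, ∀ r : ℝ,
      volume {ω | |W ω i k * x k + r| ≤ t * (n : ℝ) ^ (-((c + 1) / 2))} ≤ ENNReal.ofReal t :=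
    fun i hi => measure_abs_entry_mul_add_le hskew hmeas hgauss (ne_of_mem_of_not_mem hi hkS)
      (by positivity) ht.le (Finset.mem_filter.1 (hSk hi)).2 hk
  calc volume {ω | ‖toEuclideanCLM (𝕜 := ℝ) (W ω) x‖ ≤ t * (n : ℝ) ^ (-((c + 1) / 2))}
      ≤ volume {ω | ∀ i ∈ S, |(W ω *ᵥ x) i| ≤ t * (n : ℝ) ^ (-((c + 1) / 2))} :=
        measure_mono fun ω hω i _ => (PiLp.norm_apply_le _ i).trans hω
    _ ≤ ENNReal.ofReal t ^ S.card := measure_forall_abs_mulVec_le hskew hmeas hindep x hkS hentry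
    _ = ENNReal.ofReal ((1 * t) ^ d) := by rw [hScard, one_mul, ENNReal.ofReal_pow ht.le]
end

section
/- Fix δ ∈ (0, 1/6). For m = ⌊δn/2⌋ and M = 2(m+n), let Γ be the graph on vertex set [M] in which: vertices 1,…,n form a clique (the center); every vertex in {n+1,…,2(n+m)} is connected to all center vertices; and additionally, for each k with n < k ≤ n+m, vertices 2k−1 and 2k are connected to each other. Then the number of perfect matchings of Γ equals n!. -/
/-!
A perfect matching is the same as an involution sending every vertex to a neighbour. In `Γ` the
mid vertices `n, …, 2n - 1` are adjacent only to the center, so they are matched injectively,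
hence bijectively, onto it. This uses up the center, so every peripheral vertex is forced onto
its mate in the pair `{2k, 2k + 1}`. A perfect matching is therefore the same as a permutation
of the center.
-/

/-- The graph of Proposition 1.8: on M = 2(m+n) vertices (0-indexed), vertices
0,…,n−1 form a clique (the center), every vertex ≥ n is connected to all center
vertices, and additionally the peripheral pairs (2j, 2j+1) for j ≥ n are connected. -/
def periGraph (n m : ℕ) : SimpleGraph (Fin (2 * (m + n))) where
  Adj v w := v ≠ w ∧ (v.1 < n ∨ w.1 < n ∨
    (2 * n ≤ v.1 ∧ 2 * n ≤ w.1 ∧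
      ((w.1 = v.1 + 1 ∧ v.1 % 2 = 0) ∨ (v.1 = w.1 + 1 ∧ w.1 % 2 = 0))))
  symm := by
    constructor
    rintro v w ⟨h1, h2⟩
    exact ⟨fun h => h1 h.symm, by tauto⟩
  loopless := by constructor; rintro v ⟨h1, _⟩; exact h1 rfl

namespace SimpleGraph

variable {V : Type*} {G : SimpleGraph V}

def Subgraph.ofInvolution (f : V → V) (hf : Function.Involutive f) (hadj : ∀ v, G.Adj v (f v)) :
    G.Subgraph where
  verts := Set.univ
  Adj v w := f v = w
  adj_sub := by rintro v _ rfl; exact hadj v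
  edge_vert _ := trivial
  symm := ⟨by rintro v _ rfl; exact hf v⟩

lemma Subgraph.isPerfectMatching_ofInvolution (f : V → V) (hf : Function.Involutive f)
    (hadj : ∀ v, G.Adj v (f v)) : (Subgraph.ofInvolution f hf hadj).IsPerfectMatching :=
  Subgraph.isPerfectMatching_iff.mpr fun v => ⟨f v, rfl, fun _ h => Eq.symm h⟩

noncomputable def perfectMatchingEquivInvolution (G : SimpleGraph V) :
    {M : G.Subgraph // M.IsPerfectMatching} ≃
      {f : V → V // Function.Involutive f ∧ ∀ v, G.Adj v (f v)} where
  toFun M :=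
    have hM := Subgraph.isPerfectMatching_iff.mp M.2
    ⟨fun v => (hM v).choose,
      fun v => ((hM _).choose_spec.2 v (hM v).choose_spec.1.symm).symm,
      fun v => M.1.adj_sub (hM v).choose_spec.1⟩
  invFun f := ⟨Subgraph.ofInvolution f.1 f.2.1 f.2.2, Subgraph.isPerfectMatching_ofInvolution ..⟩
  left_inv M := by
    have hM := Subgraph.isPerfectMatching_iff.mp M.2
    refine Subtype.ext (Subgraph.ext (M.2.2.verts_eq_univ).symm ?_)
    ext v w
    exact ⟨fun h => h ▸ (hM v).choose_spec.1, fun h => ((hM v).choose_spec.2 w h).symm⟩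
  right_inv f := by
    refine Subtype.ext (funext fun v => ?_)
    have hM := Subgraph.isPerfectMatching_iff.mp
      (Subgraph.isPerfectMatching_ofInvolution f.1 f.2.1 f.2.2)
    exact ((hM v).choose_spec.2 (f.1 v) rfl).symm

end SimpleGraph

namespace periGraph

variable {n m : ℕ}

lemma adj_iff {v w : Fin (2 * (m + n))} :
    (periGraph n m).Adj v w ↔ v ≠ w ∧ (v.1 < n ∨ w.1 < n ∨
      (2 * n ≤ v.1 ∧ 2 * n ≤ w.1 ∧
        ((w.1 = v.1 + 1 ∧ v.1 % 2 = 0) ∨ (v.1 = w.1 + 1 ∧ w.1 % 2 = 0)))) := Iff.rfl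

def center (i : Fin n) : Fin (2 * (m + n)) := ⟨i, by have := i.2; omega⟩

def mid (i : Fin n) : Fin (2 * (m + n)) := ⟨n + i, by have := i.2; omega⟩

/-- The other vertex of the pair `{2k, 2k + 1}` containing `v`. -/
def mate (v : Fin (2 * (m + n))) : Fin (2 * (m + n)) :=
  ⟨if v.1 % 2 = 0 then v + 1 else v - 1, by have := v.2; split <;> omega⟩

lemma center_injective : Function.Injective (center : Fin n → Fin (2 * (m + n))) :=
  fun _ _ h => Fin.ext (congrArg Fin.val h :)

lemma mid_injective : Function.Injective (mid : Fin n → Fin (2 * (m + n))) :=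
  fun _ _ h => Fin.ext (by have := Fin.val_eq_of_eq h; simp only [mid] at this; omega)

lemma center_ne_mid (i j : Fin n) : center i ≠ (mid j : Fin (2 * (m + n))) := by
  intro h; have := Fin.val_eq_of_eq h; simp only [center, mid] at this; omega

lemma vertex_cases (v : Fin (2 * (m + n))) :
    (∃ i, v = center i) ∨ (∃ i, v = mid i) ∨ 2 * n ≤ v.1 := by
  rcases lt_or_ge v.1 n with hc | hc
  · exact .inl ⟨⟨v, hc⟩, rfl⟩
  rcases lt_or_ge v.1 (2 * n) with hm | hm
  · exact .inr (.inl ⟨⟨v - n, by omega⟩, Fin.ext (by simp only [mid]; omega)⟩)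
  · exact .inr (.inr hm)

lemma mate_mate (v : Fin (2 * (m + n))) : mate (mate v) = v := by
  ext; simp only [mate]; split <;> split <;> omega

lemma le_mate {v : Fin (2 * (m + n))} (hv : 2 * n ≤ v.1) : 2 * n ≤ (mate v).1 := by
  simp only [mate]; split <;> omega

lemma adj_mate {v : Fin (2 * (m + n))} (hv : 2 * n ≤ v.1) : (periGraph n m).Adj v (mate v) := by
  refine ⟨fun h => ?_, .inr (.inr ⟨hv, le_mate hv, ?_⟩)⟩
  · have := Fin.val_eq_of_eq h; simp only [mate] at this; split at this <;> omega
  · simp only [mate]; split <;> omega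

lemma lt_of_adj_mid {i : Fin n} {w : Fin (2 * (m + n))} (h : (periGraph n m).Adj (mid i) w) :
    w.1 < n := by
  have := i.2; simp only [adj_iff, mid] at h; omega

lemma eq_mate_of_adj {v w : Fin (2 * (m + n))} (hv : 2 * n ≤ v.1) (hw : n ≤ w.1)
    (h : (periGraph n m).Adj v w) : w = mate v := by
  ext; simp only [adj_iff] at h; simp only [mate]; split <;> omega

def matchingOfPerm (σ : Equiv.Perm (Fin n)) (v : Fin (2 * (m + n))) : Fin (2 * (m + n)) :=
  if hc : v.1 < n then mid (σ.symm ⟨v, hc⟩)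
  else if hm : v.1 < 2 * n then center (σ ⟨v - n, by omega⟩)
  else mate v

section matchingOfPerm

variable (σ : Equiv.Perm (Fin n))

lemma matchingOfPerm_center (i : Fin n) :
    matchingOfPerm σ (center i : Fin (2 * (m + n))) = mid (σ.symm i) := by
  simp [matchingOfPerm, center]

lemma matchingOfPerm_mid (i : Fin n) :
    matchingOfPerm σ (mid i : Fin (2 * (m + n))) = center (σ i) := by
  have := i.2
  simp only [matchingOfPerm, mid, dif_neg (show ¬ n + i.1 < n by omega),
    dif_pos (show n + i.1 < 2 * n by omega), Nat.add_sub_cancel_left]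

lemma matchingOfPerm_of_le {v : Fin (2 * (m + n))} (hv : 2 * n ≤ v.1) :
    matchingOfPerm σ v = mate v := by
  simp only [matchingOfPerm, dif_neg (show ¬ v.1 < n by omega),
    dif_neg (show ¬ v.1 < 2 * n by omega)]

lemma matchingOfPerm_involutive : Function.Involutive (matchingOfPerm (m := m) σ) := by
  intro v
  obtain ⟨i, rfl⟩ | ⟨i, rfl⟩ | hv := vertex_cases v
  iterate 2 · simp [matchingOfPerm_center, matchingOfPerm_mid]
  · rw [matchingOfPerm_of_le σ hv, matchingOfPerm_of_le σ (le_mate hv), mate_mate]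

lemma adj_matchingOfPerm (v : Fin (2 * (m + n))) : (periGraph n m).Adj v (matchingOfPerm σ v) := by
  obtain ⟨i, rfl⟩ | ⟨i, rfl⟩ | hv := vertex_cases v
  · rw [matchingOfPerm_center]
    exact ⟨center_ne_mid _ _, .inl i.2⟩
  · rw [matchingOfPerm_mid]
    exact ⟨(center_ne_mid _ _).symm, .inr (.inl (σ i).2)⟩
  · rw [matchingOfPerm_of_le σ hv]
    exact adj_mate hv

end matchingOfPerm

section permOfInvolution

variable {f : Fin (2 * (m + n)) → Fin (2 * (m + n))} (hf : Function.Involutive f)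
  (hadj : ∀ v, (periGraph n m).Adj v (f v))

noncomputable def permOfInvolution : Equiv.Perm (Fin n) :=
  Equiv.ofBijective (fun i => ⟨f (mid i), lt_of_adj_mid (hadj _)⟩) <|
    Finite.injective_iff_bijective.mp fun _ _ h =>
      mid_injective (hf.injective (Fin.ext (congrArg Fin.val h :)))

lemma center_permOfInvolution (i : Fin n) : center (permOfInvolution hf hadj i) = f (mid i) :=
  rfl

/-- Every center vertex is matched with a mid vertex, which leaves each peripheral vertex only
its `mate`. -/
lemma eq_matchingOfPerm_permOfInvolution : f = matchingOfPerm (permOfInvolution hf hadj) := by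
  set σ := permOfInvolution hf hadj
  have hcenter (i : Fin n) : f (center i) = mid (σ.symm i) := by
    rw [← σ.apply_symm_apply i, center_permOfInvolution, hf, Equiv.symm_apply_apply]
  funext v
  obtain ⟨i, rfl⟩ | ⟨i, rfl⟩ | hv := vertex_cases v
  · rw [hcenter, matchingOfPerm_center]
  · rw [← center_permOfInvolution hf hadj, matchingOfPerm_mid]
  · have hfv : n ≤ (f v).1 := by
      by_contra! hlt
      have hv_mid : v = mid (σ.symm ⟨f v, hlt⟩) := (hf v).symm.trans (hcenter ⟨f v, hlt⟩)
      have := (σ.symm ⟨f v, hlt⟩).2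
      have := congrArg Fin.val hv_mid
      simp only [mid] at this; omega
    rw [matchingOfPerm_of_le σ hv, eq_mate_of_adj hv hfv (hadj v)]

end permOfInvolution

noncomputable def involutionEquivPerm :
    {f : Fin (2 * (m + n)) → Fin (2 * (m + n)) //
      Function.Involutive f ∧ ∀ v, (periGraph n m).Adj v (f v)} ≃ Equiv.Perm (Fin n) where
  toFun f := permOfInvolution f.2.1 f.2.2
  invFun σ := ⟨matchingOfPerm σ, matchingOfPerm_involutive σ, adj_matchingOfPerm σ⟩
  left_inv f := Subtype.ext (eq_matchingOfPerm_permOfInvolution f.2.1 f.2.2).symm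
  right_inv σ := Equiv.ext fun i => center_injective (m := m) <|
    matchingOfPerm_mid σ i

end periGraph

theorem stmt15_general (n m : ℕ) :
    Nat.card {M : (periGraph n m).Subgraph // M.IsPerfectMatching} = n.factorial := by
  rw [Nat.card_congr ((periGraph n m).perfectMatchingEquivInvolution.trans
    periGraph.involutionEquivPerm), Nat.card_perm, Nat.card_fin]

/-- Proposition 1.8, counting step: with δ ∈ (0, 1/6) and m = ⌊δn/2⌋, the number
of perfect matchings of the graph Γ equals n!. -/
theorem stmt15 (δ : ℝ) (hδ0 : 0 < δ) (hδ1 : δ < 1 / 6) (n m : ℕ)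
    (hm : m = ⌊δ * n / 2⌋₊) :
    Nat.card {M : (periGraph n m).Subgraph // M.IsPerfectMatching} = n.factorial :=
  stmt15_general n m
end
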